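/- Let p_1, ..., p_n be pairwise distinct real (or complex) numbers and m a natural number. Then ∑ over all n-tuples (m_1,...,m_n) of non-negative integers with m_1 + ... + m_n = m of ∏_{i=1}^n p_i^{m_i} equals ∑_{i=1}^n p_i^{m+n-1} / ∏_{j≠i} (p_i - p_j). -/

import Mathlib

/-!
Write `h_m(S)` for the complete homogeneous polynomial in the values `v i`, `i ∈ S`, and
`Δ_k(S) = ∑_{i ∈ S} v_i^k / ∏_{j ≠ i} (v_i - v_j)` for the divided difference of `X^k`.
Both satisfy the same recursion when a node `a` is added to `S`:
`h_{m+1}(a ∪ S) = h_{m+1}(S) + v_a h_m(a ∪ S)` (split off the exponent of `v_a`), and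
`Δ_{k+1}(a ∪ S) - v_a Δ_k(a ∪ S) = Δ_k(S)`, because the factor `v_i - v_a` cancels the
corresponding factor of the denominator and kills the term `i = a`.
The initial value `Δ_{|S|-1}(S) = 1 = h_0(S)` is the leading coefficient of the Lagrange
interpolant of `X^{|S|-1}`.
-/

open Finset Polynomial

variable {ι : Type*} [DecidableEq ι]

section CommSemiring

variable {R : Type*} [CommSemiring R]

def completeHomogeneous (s : Finset ι) (v : ι → R) (m : ℕ) : R :=
  ∑ f ∈ s.piAntidiag m, ∏ i ∈ s, v i ^ f i

lemma completeHomogeneous_zero (s : Finset ι) (v : ι → R) : completeHomogeneous s v 0 = 1 := by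
  simp [completeHomogeneous]

lemma completeHomogeneous_empty_succ (v : ι → R) (m : ℕ) :
    completeHomogeneous ∅ v (m + 1) = 0 := by
  simp [completeHomogeneous]

lemma completeHomogeneous_cons {a : ι} {s : Finset ι} (ha : a ∉ s) (v : ι → R) (m : ℕ) :
    completeHomogeneous (cons a s ha) v m =
      ∑ p ∈ antidiagonal m, v a ^ p.1 * completeHomogeneous s v p.2 := by
  rw [completeHomogeneous, piAntidiag_cons ha, sum_disjiUnion]
  refine sum_congr rfl fun p _ => ?_
  rw [sum_map, completeHomogeneous, mul_sum]
  refine sum_congr rfl fun f hf => ?_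
  have hfa : f a = 0 := by_contra fun h => ha ((mem_piAntidiag.mp hf).2 a h)
  have hrest : ∀ i ∈ s, v i ^ (f i + if i = a then p.1 else 0) = v i ^ f i := fun i hi => by
    rw [if_neg (ne_of_mem_of_not_mem hi ha), add_zero]
  rw [addRightEmbedding_apply, prod_cons]
  congr 1
  · simp [hfa]
  · exact prod_congr rfl hrest

lemma completeHomogeneous_cons_succ {a : ι} {s : Finset ι} (ha : a ∉ s) (v : ι → R) (m : ℕ) :
    completeHomogeneous (cons a s ha) v (m + 1) =
      completeHomogeneous s v (m + 1) + v a * completeHomogeneous (cons a s ha) v m := by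
  rw [completeHomogeneous_cons, Nat.sum_antidiagonal_succ, completeHomogeneous_cons, mul_sum]
  simp only [pow_zero, one_mul, pow_succ', mul_assoc]

end CommSemiring

section Field

variable {K : Type*} [Field K]

def dividedDifferencePow (s : Finset ι) (v : ι → K) (k : ℕ) : K :=
  ∑ i ∈ s, v i ^ k / ∏ j ∈ s.erase i, (v i - v j)

lemma dividedDifferencePow_card_sub_one {s : Finset ι} {v : ι → K} (hv : Set.InjOn v s)
    (hs : s.Nonempty) : dividedDifferencePow s v (#s - 1) = 1 := by
  have hdeg : (X ^ (#s - 1) : K[X]).degree < #s := by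
    rw [degree_X_pow]
    exact_mod_cast Nat.sub_lt hs.card_pos one_pos
  simpa [dividedDifferencePow] using (Lagrange.coeff_eq_sum hv hdeg).symm

lemma dividedDifferencePow_cons_succ {a : ι} {s : Finset ι} (ha : a ∉ s) {v : ι → K}
    (hv : ∀ i ∈ s, v i ≠ v a) (k : ℕ) :
    dividedDifferencePow (cons a s ha) v (k + 1) =
      dividedDifferencePow s v k + v a * dividedDifferencePow (cons a s ha) v k := by
  have hterm : ∀ i ∈ s, v i ^ (k + 1) / ∏ j ∈ (cons a s ha).erase i, (v i - v j) =
      v i ^ k / ∏ j ∈ s.erase i, (v i - v j) +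
        v a * (v i ^ k / ∏ j ∈ (cons a s ha).erase i, (v i - v j)) := fun i hi => by
    rw [erase_cons_of_ne ha (ne_of_mem_of_not_mem hi ha).symm, prod_cons]
    have hia : v i - v a ≠ 0 := sub_ne_zero.mpr (hv i hi)
    field_simp
    ring
  rw [dividedDifferencePow, sum_cons, sum_congr rfl hterm, sum_add_distrib, ← mul_sum,
    dividedDifferencePow, dividedDifferencePow, sum_cons, pow_succ', mul_div_assoc]
  ring

theorem completeHomogeneous_succ_eq_dividedDifferencePow {s : Finset ι} {v : ι → K}
    (hv : Set.InjOn v s) (m : ℕ) :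
    completeHomogeneous s v (m + 1) = dividedDifferencePow s v (m + #s) := by
  induction s using Finset.cons_induction generalizing m with
  | empty => simp [completeHomogeneous_empty_succ, dividedDifferencePow]
  | cons a s ha ih =>
    have hvs : Set.InjOn v s := hv.mono (by simp)
    have hva : ∀ i ∈ s, v i ≠ v a := fun i hi h => ha (hv (by simp [hi]) (by simp) h ▸ hi)
    have hcons : ∀ m, completeHomogeneous (cons a s ha) v m =
        dividedDifferencePow (cons a s ha) v (m + #s) := by
      intro m
      induction m with
      | zero =>
        rw [completeHomogeneous_zero, zero_add, ← dividedDifferencePow_card_sub_one hv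
          (cons_nonempty ha), card_cons, Nat.add_sub_cancel]
      | succ m ihm =>
        rw [completeHomogeneous_cons_succ, ih hvs, ihm, add_right_comm,
          dividedDifferencePow_cons_succ ha hva]
    rw [hcons, card_cons, add_right_comm, add_assoc]

theorem completeHomogeneous_eq_dividedDifferencePow {s : Finset ι} {v : ι → K}
    (hv : Set.InjOn v s) (hs : s.Nonempty) (m : ℕ) :
    completeHomogeneous s v m = dividedDifferencePow s v (m + #s - 1) := by
  cases m with
  | zero => rw [completeHomogeneous_zero, zero_add, dividedDifferencePow_card_sub_one hv hs]
  | succ m =>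
    rw [completeHomogeneous_succ_eq_dividedDifferencePow hv, add_right_comm, Nat.add_sub_cancel]

end Field

lemma filter_piFinset_range_sum_eq_piAntidiag [Fintype ι] (m : ℕ) :
    (Fintype.piFinset fun _ : ι => range (m + 1)).filter (fun f => ∑ i, f i = m) =
      univ.piAntidiag m := by
  ext f
  simp only [mem_filter, Fintype.mem_piFinset, mem_range, mem_piAntidiag, mem_univ,
    implies_true, and_true, and_iff_right_iff_imp]
  rintro rfl i
  exact Nat.lt_succ_of_le (single_le_sum (fun j _ => Nat.zero_le (f j)) (mem_univ i))

theorem stmt_1 (n : ℕ) (hn : 1 ≤ n) (p : Fin n → ℝ) (hp : Function.Injective p) (m : ℕ) :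
    ∑ f ∈ (Fintype.piFinset fun _ : Fin n => Finset.range (m + 1)).filter
        (fun f => ∑ i, f i = m),
      ∏ i, p i ^ f i =
    ∑ i, p i ^ (m + n - 1) / ∏ j ∈ Finset.univ.erase i, (p i - p j) := by
  rw [filter_piFinset_range_sum_eq_piAntidiag]
  simpa [completeHomogeneous, dividedDifferencePow] using
    completeHomogeneous_eq_dividedDifferencePow hp.injOn ⟨⟨0, hn⟩, mem_univ _⟩ m
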